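/- Let S = (H, w, μ) be a summary, q a CQ with res(q) ⊆ dom(μ), τ an answer to μ(q) on H, and P ∈ B_τ. Then the number of τ-expansions to P equals c(τ,P), i.e., |Exp_τ(P)| = ∏_{x a variable in the range of σ_P} size_S(τ(x)). -/

import Mathlib

/- ## Basic RDF notions -/

attribute [local instance] Classical.propDecidable

/-- A term is a resource or a variable. -/
inductive Term (R V : Type) where
  | res : R → Term R V
  | var : V → Term R V
deriving DecidableEq

/-- An atom is a triple of terms. -/
abbrev Atom (R V : Type) := Term R V × Term R V × Term R V

/-- An RDF graph is a finite set of triples of resources. -/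
abbrev RDFGraph (R : Type) := Finset (R × R × R)

/-- A conjunctive query is a finite set of atoms. -/
abbrev CQ (R V : Type) := Finset (Atom R V)

variable {R V : Type} [DecidableEq R] [DecidableEq V]

/-- The resources occurring in an RDF graph. -/
def graphRes (G : RDFGraph R) : Finset R :=
  G.image (fun t => t.1) ∪ G.image (fun t => t.2.1) ∪ G.image (fun t => t.2.2)

/-- A summary `S = (H, w, μ)`: a summarisation graph `H`, a weight function `w`
positive on `H`, and a summarisation function `μ` defined on a finite set `dom` of
resources, surjective onto the resources of `H` (the buckets). -/
structure Summary (R : Type) [DecidableEq R] where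
  H : RDFGraph R
  w : R × R × R → ℕ
  dom : Finset R
  μ : R → R
  w_pos : ∀ h ∈ H, 0 < w h
  surj : ∀ b ∈ graphRes H, ∃ r ∈ dom, μ r = b

/-- Application of `μ` to a resource (resources outside `dom μ` are left unchanged). -/
def appMu (S : Summary R) (r : R) : R := if r ∈ S.dom then S.μ r else r

/-- Application of `μ` to a triple of resources. -/
def muT (S : Summary R) (t : R × R × R) : R × R × R :=
  (appMu S t.1, appMu S t.2.1, appMu S t.2.2)

/-- The `S`-size of a bucket: the number of resources mapped to it. -/
def size1 (S : Summary R) (b : R) : ℕ := (S.dom.filter (fun r => S.μ r = b)).card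

/-- The `S`-size of a triple of buckets. -/
def size3 (S : Summary R) (h : R × R × R) : ℕ := size1 S h.1 * size1 S h.2.1 * size1 S h.2.2

/-- `S` represents the RDF graph `G`. -/
def represents (S : Summary R) (G : RDFGraph R) : Prop :=
  graphRes G ⊆ S.dom ∧ S.H = G.image (muT S) ∧
    ∀ h ∈ S.H, S.w h = (G.filter (fun t => muT S t = h)).card

/-- `⟦S⟧`: the set of all RDF graphs represented by `S`. -/
def worlds (S : Summary R) : Set (RDFGraph R) := {G | represents S G}

/-- A summary is consistent if it represents at least one graph. -/
def consistent (S : Summary R) : Prop := (worlds S).Nonempty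

/- ## Queries, substitutions and answers -/

def varsT : Term R V → Finset V
  | .res _ => ∅
  | .var x => {x}

def resT : Term R V → Finset R
  | .res r => {r}
  | .var _ => ∅

def varsA (a : Atom R V) : Finset V := varsT a.1 ∪ varsT a.2.1 ∪ varsT a.2.2

def resA (a : Atom R V) : Finset R := resT a.1 ∪ resT a.2.1 ∪ resT a.2.2

/-- The variables of a CQ. -/
def varsQ (q : CQ R V) : Finset V := q.biUnion varsA

/-- The resources of a CQ. -/
def resQ (q : CQ R V) : Finset R := q.biUnion resA

/-- The terms of a CQ. -/
def termsQ (q : CQ R V) : Finset (Term R V) := q.biUnion (fun a => {a.1, a.2.1, a.2.2})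

/-- A substitution (a partial map from variables to resources) applied to a term. -/
def appT (π : V → Option R) : Term R V → Option R
  | .res r => some r
  | .var x => π x

/-- Application of a substitution to a term, with a default value (only used when the
substitution is undefined on a variable of the term). -/
def appTD [Inhabited R] (π : V → Option R) (t : Term R V) : R := (appT π t).getD default

/-- Application of a substitution to an atom. -/
def appAtomD [Inhabited R] (π : V → Option R) (a : Atom R V) : R × R × R :=
  (appTD π a.1, appTD π a.2.1, appTD π a.2.2)

/-- `ans(q, G)`: the answers to the CQ `q` on the graph `G`, i.e. substitutions whose
domain is exactly `var(q)` and which map every atom of `q` into `G`. -/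
def ansSet [Inhabited R] (q : CQ R V) (G : RDFGraph R) : Set (V → Option R) :=
  {π | (∀ x, (π x).isSome ↔ x ∈ varsQ q) ∧ ∀ a ∈ q, appAtomD π a ∈ G}

/-- `E_S[q]`: the expected cardinality of `q` over the graphs represented by `S`. -/
noncomputable def expect [Inhabited R] (S : Summary R) (q : CQ R V) : ℝ :=
  (∑ᶠ G ∈ worlds S, ((ansSet q G).ncard : ℝ)) / ((worlds S).ncard : ℝ)

/-- `v_S[q]`: the variance of the cardinality of `q` over the graphs represented by `S`. -/
noncomputable def varq [Inhabited R] (S : Summary R) (q : CQ R V) : ℝ :=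
  (∑ᶠ G ∈ worlds S, (((ansSet q G).ncard : ℝ) - expect S q) ^ 2) / ((worlds S).ncard : ℝ)

/-- `μ` applied to a term. -/
def muTerm (S : Summary R) : Term R V → Term R V
  | .res r => .res (appMu S r)
  | .var x => .var x

/-- `μ` applied to an atom. -/
def muAtom (S : Summary R) (a : Atom R V) : Atom R V :=
  (muTerm S a.1, muTerm S a.2.1, muTerm S a.2.2)

/-- `μ(q)`: the CQ obtained by applying `μ` to every atom of `q`. -/
def muQ (S : Summary R) (q : CQ R V) : CQ R V := q.image (muAtom S)

/- ## Partitions of a query -/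

/-- A partition of a CQ `q`: mutually disjoint nonempty subsets of `q` covering `q`. -/
def IsPartition (q : CQ R V) (P : Finset (CQ R V)) : Prop :=
  (∀ u ∈ P, u.Nonempty) ∧ (∀ u ∈ P, ∀ u' ∈ P, u ≠ u' → Disjoint u u') ∧ P.biUnion id = q

/-- The edges of the term graph `G_P`. -/
def edgeRel (P : Finset (CQ R V)) (t t' : Term R V) : Prop :=
  ∃ u ∈ P, ∃ a ∈ u, ∃ a' ∈ u,
    (t = a.1 ∧ t' = a'.1) ∨ (t = a.2.1 ∧ t' = a'.2.1) ∨ (t = a.2.2 ∧ t' = a'.2.2)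

/-- Reachability in the term graph `G_P`. -/
def reach (P : Finset (CQ R V)) (t t' : Term R V) : Prop := Relation.EqvGen (edgeRel P) t t'

/-- `P` is unifiable: no two distinct resources of `q` are connected in `G_P`. -/
def UnifiablePart (q : CQ R V) (P : Finset (CQ R V)) : Prop :=
  ∀ r r' : R, Term.res r ∈ termsQ q → Term.res r' ∈ termsQ q →
    reach P (Term.res r) (Term.res r') → r = r'

/-- The partition base `B` of `q`: all unifiable partitions of `q`. -/
def pbase (q : CQ R V) : Set (Finset (CQ R V)) := {P | IsPartition q P ∧ UnifiablePart q P}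

/-- The partial order `⪯` on partitions. -/
def pref (P P' : Finset (CQ R V)) : Prop := ∀ u ∈ P, ∃ u' ∈ P', u ⊆ u'

/-- The strict order `≺` on partitions. -/
def sPref (P P' : Finset (CQ R V)) : Prop := pref P P' ∧ P ≠ P'

/-- Chains from `P` to `P'` in the partition base of `q` (as nonempty lists
`[P = P_0, …, P_ℓ = P']`; the length of the chain is the list length minus one). -/
def chainSet (q : CQ R V) (P P' : Finset (CQ R V)) : Set (List (Finset (CQ R V))) :=
  {l | l ≠ [] ∧ l.Chain' sPref ∧ (∀ X ∈ l, X ∈ pbase q) ∧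
    l.head? = some P ∧ l.getLast? = some P'}

/-- `K(P, P')`: the number of even-length chains minus the number of odd-length chains. -/
noncomputable def Kcoef (q : CQ R V) (P P' : Finset (CQ R V)) : ℤ :=
  ({l ∈ chainSet q P P' | Even (l.length - 1)}.ncard : ℤ)
    - ({l ∈ chainSet q P P' | Odd (l.length - 1)}.ncard : ℤ)

/-- `σ_P`: maps each variable `x` of `q` to the `≤`-least term reachable from `x` in `G_P`. -/
noncomputable def sigmaP [LinearOrder (Term R V)] (q : CQ R V) (P : Finset (CQ R V)) (x : V) :
    Term R V :=
  if h : ((termsQ q).filter (fun t => reach P (Term.var x) t)).Nonempty then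
    ((termsQ q).filter (fun t => reach P (Term.var x) t)).min' h
  else Term.var x

/-- The answer `τ` to `μ(q)` on `H` satisfies the partition `P`. -/
def satisfiesP [LinearOrder (Term R V)] (S : Summary R) (q : CQ R V) (τ : V → Option R)
    (P : Finset (CQ R V)) : Prop :=
  P ∈ pbase q ∧ ∀ x ∈ varsQ q,
    (∀ y, sigmaP q P x = Term.var y → τ x = τ y) ∧
    (∀ r, sigmaP q P x = Term.res r → τ x = some (appMu S r))

/-- `B_τ`: the partitions of the partition base satisfied by `τ`. -/
def Btau [LinearOrder (Term R V)] (S : Summary R) (q : CQ R V) (τ : V → Option R) :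
    Set (Finset (CQ R V)) := {P | satisfiesP S q τ P}

/-- The variables occurring in the range of `σ_P`. -/
noncomputable def vrngP [LinearOrder (Term R V)] (q : CQ R V) (P : Finset (CQ R V)) : Finset V :=
  (varsQ q).filter (fun y => ∃ x ∈ varsQ q, sigmaP q P x = Term.var y)

/-- The `S`-size of an optional bucket. -/
def sizeOpt (S : Summary R) (o : Option R) : ℕ := o.elim 0 (size1 S)

/-- `c(τ, P) = ∏_{x ∈ vrng(σ_P)} size_S(τ(x))`. -/
noncomputable def cCoef [LinearOrder (Term R V)] (S : Summary R) (q : CQ R V)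
    (τ : V → Option R) (P : Finset (CQ R V)) : ℕ :=
  ∏ y ∈ vrngP q P, sizeOpt S (τ y)

/-- `τ(μ(q))`. -/
noncomputable def tauMuQ [Inhabited R] (S : Summary R) (q : CQ R V) (τ : V → Option R) :
    RDFGraph R := (muQ S q).image (appAtomD τ)

/-- `n_h = |{u ∈ P : τ(μ(u)) = {h}}|`. -/
noncomputable def nCount [Inhabited R] (S : Summary R) (τ : V → Option R)
    (P : Finset (CQ R V)) (h : R × R × R) : ℕ :=
  (P.filter (fun u => u.image (fun a => appAtomD τ (muAtom S a)) = ({h} : Finset (R × R × R)))).card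

/-- `F(τ, P)`, defined via falling factorials. -/
noncomputable def Fcoef [Inhabited R] (S : Summary R) (q : CQ R V) (τ : V → Option R)
    (P : Finset (CQ R V)) : ℝ :=
  if ∀ h ∈ tauMuQ S q τ, nCount S τ P h ≤ S.w h then
    ∏ h ∈ tauMuQ S q τ,
      ((S.w h).descFactorial (nCount S τ P h) : ℝ) / ((size3 S h).descFactorial (nCount S τ P h) : ℝ)
  else 0

/-- `Exp_τ(P)`: the `τ`-expansions to `P`. -/
def ExpSet [LinearOrder (Term R V)] (S : Summary R) (q : CQ R V) (τ : V → Option R)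
    (P : Finset (CQ R V)) : Set (V → Option R) :=
  {π | (∀ x, (π x).isSome ↔ x ∈ varsQ q) ∧ (∀ x r, π x = some r → r ∈ S.dom) ∧
    ∀ x ∈ varsQ q,
      Option.map (appMu S) (π x) = τ x ∧
      (∀ y, sigmaP q P x = Term.var y → π x = π y) ∧
      (∀ r, sigmaP q P x = Term.res r → π x = some r)}

/-- `MaxExp_τ(P)`: the `τ`-expansions to `P` that are not `τ`-expansions to any `P' ≻ P`. -/
def MaxExp [LinearOrder (Term R V)] (S : Summary R) (q : CQ R V) (τ : V → Option R)
    (P : Finset (CQ R V)) : Set (V → Option R) :=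
  {π ∈ ExpSet S q τ P | ¬ ∃ P' ∈ Btau S q τ, sPref P P' ∧ π ∈ ExpSet S q τ P'}

/- ## Renaming, unification, q-error -/

def renTerm (ρ : V → V) : Term R V → Term R V
  | .res r => .res r
  | .var x => .var (ρ x)

/-- `ρ(q)`: renaming of the variables of `q` along `ρ`. -/
def renameQ (ρ : V → V) (q : CQ R V) : CQ R V :=
  q.image (fun a => (renTerm ρ a.1, renTerm ρ a.2.1, renTerm ρ a.2.2))

/-- Application of a variable-to-term substitution `κ` to a term. -/
def appK (κ : V → Term R V) : Term R V → Term R V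
  | .res r => .res r
  | .var x => κ x

/-- Two atoms are unifiable if some substitution `κ` makes them equal. -/
def unifAtoms (a1 a2 : Atom R V) : Prop :=
  ∃ κ : V → Term R V,
    (appK κ a1.1, appK κ a1.2.1, appK κ a1.2.2) = (appK κ a2.1, appK κ a2.2.1, appK κ a2.2.2)

/-- `q` is `μ`-unification-free: no two distinct atoms of `μ(q)` are unifiable. -/
def muUnifFree (S : Summary R) (q : CQ R V) : Prop :=
  ∀ a1 ∈ muQ S q, ∀ a2 ∈ muQ S q, a1 ≠ a2 → ¬ unifAtoms a1 a2

/-- The q-error of estimating a cardinality `N` as `E`. -/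
noncomputable def qerror (N E : ℝ) : ℝ := max (max N 1 / max E 1) (max E 1 / max N 1)

/-- A triple of resources viewed as a (variable-free) atom. -/
def resAtom (t : R × R × R) : Atom R V := (Term.res t.1, Term.res t.2.1, Term.res t.2.2)

/-- `μ⁻¹(h)`: the triples over `dom(μ)` that summarise as `h`. -/
def preim (S : Summary R) (h : R × R × R) : Finset (R × R × R) :=
  (S.dom ×ˢ S.dom ×ˢ S.dom).filter (fun t => muT S t = h)

section AuxStmt9

variable {R V : Type} [DecidableEq R] [DecidableEq V]

lemma aux_mem_varsT_iff {x : V} {t : Term R V} : x ∈ varsT t ↔ t = Term.var x := by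
  cases t <;> simp [varsT, eq_comm]

lemma aux_var_mem_termsQ {q : CQ R V} {x : V} :
    x ∈ varsQ q ↔ (Term.var x : Term R V) ∈ termsQ q := by
  simp only [varsQ, termsQ, Finset.mem_biUnion, varsA, Finset.mem_union, Finset.mem_insert,
    Finset.mem_singleton]
  constructor
  · rintro ⟨a, ha, h⟩
    refine ⟨a, ha, ?_⟩
    rcases h with (h | h) | h <;> rw [aux_mem_varsT_iff] at h <;> tauto
  · rintro ⟨a, ha, h⟩
    refine ⟨a, ha, ?_⟩
    rcases h with h | h | h
    · left; left; rw [← h]; simp [varsT]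
    · left; right; rw [← h]; simp [varsT]
    · right; rw [← h]; simp [varsT]

lemma aux_res_mem_resQ {q : CQ R V} {r : R} (h : (Term.res r : Term R V) ∈ termsQ q) :
    r ∈ resQ q := by
  simp only [termsQ, Finset.mem_biUnion, Finset.mem_insert, Finset.mem_singleton] at h
  obtain ⟨a, ha, h⟩ := h
  simp only [resQ, Finset.mem_biUnion]
  refine ⟨a, ha, ?_⟩
  simp only [resA, Finset.mem_union]
  rcases h with h | h | h
  · left; left; rw [← h]; simp [resT]
  · left; right; rw [← h]; simp [resT]
  · right; rw [← h]; simp [resT]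

lemma aux_sigma_spec {q : CQ R V} [LinearOrder (Term R V)] {P : Finset (CQ R V)} {x : V}
    (hx : x ∈ varsQ q) :
    sigmaP q P x ∈ termsQ q ∧ reach P (Term.var x) (sigmaP q P x) := by
  have hne : ((termsQ q).filter (fun t => reach P (Term.var x) t)).Nonempty :=
    ⟨Term.var x, Finset.mem_filter.2 ⟨aux_var_mem_termsQ.1 hx, Relation.EqvGen.refl _⟩⟩
  rw [sigmaP, dif_pos hne]
  have h := Finset.min'_mem _ hne
  exact ⟨(Finset.mem_filter.1 h).1, (Finset.mem_filter.1 h).2⟩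

lemma aux_sigma_eq_of_reach {q : CQ R V} [LinearOrder (Term R V)] {P : Finset (CQ R V)} {x y : V}
    (hy : y ∈ varsQ q)
    (h : reach P (Term.var x) (Term.var y)) : sigmaP q P x = sigmaP q P y := by
  have hset : (termsQ q).filter (fun t => reach P (Term.var x) t)
      = (termsQ q).filter (fun t => reach P (Term.var y) t) := by
    apply Finset.filter_congr
    intro t _
    constructor
    · intro ht
      exact Relation.EqvGen.trans _ _ _ (Relation.EqvGen.symm _ _ h) ht
    · intro ht
      exact Relation.EqvGen.trans _ _ _ h ht
  have hne : ((termsQ q).filter (fun t => reach P (Term.var y) t)).Nonempty :=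
    ⟨Term.var y, Finset.mem_filter.2 ⟨aux_var_mem_termsQ.1 hy, Relation.EqvGen.refl _⟩⟩
  rw [sigmaP, sigmaP]
  simp only [hset]
  rw [dif_pos hne, dif_pos hne]

lemma aux_sigma_idem {q : CQ R V} [LinearOrder (Term R V)] {P : Finset (CQ R V)} {x y : V}
    (hx : x ∈ varsQ q) (h : sigmaP q P x = Term.var y) :
    y ∈ varsQ q ∧ sigmaP q P y = Term.var y := by
  obtain ⟨hmem, hreach⟩ := aux_sigma_spec (P := P) hx
  rw [h] at hmem hreach
  have hy : y ∈ varsQ q := aux_var_mem_termsQ.2 hmem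
  exact ⟨hy, (aux_sigma_eq_of_reach hy hreach).symm.trans h⟩

/-- Evaluate a term to an optional resource, using `g` on variables. -/
def tval (g : V → Option R) : Term R V → Option R
  | .res r => some r
  | .var y => g y

end AuxStmt9

/-- The number of `τ`-expansions to `P` equals
`c(τ,P) = ∏_{x a variable in the range of σ_P} size_S(τ(x))`. -/
theorem expSet_ncard_eq_cCoef {R V : Type} [DecidableEq R] [DecidableEq V] [Inhabited R]
    [LinearOrder (Term R V)]
    (hord : ∀ (r : R) (y : V), (Term.res r : Term R V) < Term.var y)
    (S : Summary R) (q : CQ R V) (hq : resQ q ⊆ S.dom)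
    (τ : V → Option R) (hτ : τ ∈ ansSet (muQ S q) S.H)
    (P : Finset (CQ R V)) (hP : P ∈ Btau S q τ) :
    (ExpSet S q τ P).ncard = cCoef S q τ P := by
  classical
  obtain ⟨hPb, hsat⟩ := hP
  set F : V → Finset R := fun y => S.dom.filter (fun v => some (appMu S v) = τ y) with hF
  have hFcard : ∀ y, (F y).card = sizeOpt S (τ y) := by
    intro y
    cases hty : τ y with
    | none =>
        simp only [hF, sizeOpt, hty, Option.elim]
        rw [Finset.card_eq_zero, Finset.filter_eq_empty_iff]
        intro v _
        simp [hty]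
    | some b =>
        simp only [hF, sizeOpt, hty, Option.elim, size1]
        congr 1
        apply Finset.filter_congr
        intro v hv
        simp [appMu, if_pos hv, hty]
  have hvsub : ∀ {y : V}, y ∈ vrngP q P → y ∈ varsQ q := by
    intro y hy
    exact (Finset.mem_filter.1 hy).1
  -- values of π ∈ ExpSet on vrngP
  have hπget : ∀ π ∈ ExpSet S q τ P, ∀ y ∈ vrngP q P, ∃ v, π y = some v ∧ v ∈ F y := by
    intro π hπ y hy
    obtain ⟨h1, h2, h3⟩ := hπ
    have hyv := hvsub hy
    obtain ⟨v, hv⟩ := Option.isSome_iff_exists.1 ((h1 y).2 hyv)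
    refine ⟨v, hv, ?_⟩
    have hmap := (h3 y hyv).1
    rw [hv] at hmap
    simp only [hF]
    exact Finset.mem_filter.2 ⟨h2 y v hv, hmap⟩
  -- the inverse map
  set Ψ : (∀ y : (vrngP q P : Finset V), {v // v ∈ F y.1}) → V → Option R :=
    fun f x => if x ∈ varsQ q then
      tval (fun y => if hy : y ∈ vrngP q P then some (f ⟨y, hy⟩).1 else none) (sigmaP q P x)
    else none with hΨ
  have hΨval : ∀ f, ∀ x ∈ varsQ q,
      (∀ r, sigmaP q P x = Term.res r → Ψ f x = some r) ∧
      (∀ y, sigmaP q P x = Term.var y →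
        ∃ hy : y ∈ vrngP q P, Ψ f x = some (f ⟨y, hy⟩).1) := by
    intro f x hx
    constructor
    · intro r hr
      simp only [hΨ, if_pos hx, hr, tval]
    · intro y hy
      have hyv : y ∈ varsQ q := (aux_sigma_idem hx hy).1
      have hymem : y ∈ vrngP q P := by
        simp only [vrngP, Finset.mem_filter]
        exact ⟨hyv, x, hx, hy⟩
      refine ⟨hymem, ?_⟩
      simp only [hΨ, if_pos hx, hy, tval, dif_pos hymem]
  have hΨmem : ∀ f, Ψ f ∈ ExpSet S q τ P := by
    intro f
    refine ⟨?_, ?_, ?_⟩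
    · intro x
      constructor
      · intro hs
        by_contra hx
        simp only [hΨ, if_neg hx] at hs
        simp at hs
      · intro hx
        cases hσ : sigmaP q P x with
        | res r => rw [((hΨval f x hx).1 r hσ)]; rfl
        | var y =>
            obtain ⟨hy, heq⟩ := (hΨval f x hx).2 y hσ
            rw [heq]; rfl
    · intro x r hxr
      by_cases hx : x ∈ varsQ q
      · cases hσ : sigmaP q P x with
        | res r' =>
            have h1 := (hΨval f x hx).1 r' hσ
            rw [h1] at hxr
            obtain rfl : r' = r := by injection hxr
            have hmem := (aux_sigma_spec (P := P) hx).1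
            rw [hσ] at hmem
            exact hq (aux_res_mem_resQ hmem)
        | var y =>
            obtain ⟨hy, heq⟩ := (hΨval f x hx).2 y hσ
            rw [heq] at hxr
            obtain rfl : (f ⟨y, hy⟩).1 = r := by injection hxr
            have := (f ⟨y, hy⟩).2
            simp only [hF, Finset.mem_filter] at this
            exact this.1
      · simp only [hΨ, if_neg hx] at hxr
        exact absurd hxr (by simp)
    · intro x hx
      cases hσ : sigmaP q P x with
      | res r =>
          have h1 := (hΨval f x hx).1 r hσ
          refine ⟨?_, ?_, ?_⟩
          · rw [h1]
            simp only [Option.map_some]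
            exact ((hsat x hx).2 r hσ).symm
          · intro y hy; exact absurd hy (by simp)
          · intro r' hr'
            obtain rfl : r = r' := by injection hr'
            exact h1
      | var y =>
          obtain ⟨hy, heq⟩ := (hΨval f x hx).2 y hσ
          have hfy := (f ⟨y, hy⟩).2
          simp only [hF, Finset.mem_filter] at hfy
          have hyv : y ∈ varsQ q := (aux_sigma_idem hx hσ).1
          have hσy : sigmaP q P y = Term.var y := (aux_sigma_idem hx hσ).2
          obtain ⟨hy', heqy⟩ := (hΨval f y hyv).2 y hσy
          refine ⟨?_, ?_, ?_⟩
          · rw [heq]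
            simp only [Option.map_some]
            rw [hfy.2]
            exact ((hsat x hx).1 y hσ).symm
          · intro y' hy'eq
            obtain rfl : y = y' := by injection hy'eq
            rw [heq, heqy]
          · intro r hr; exact absurd hr (by simp)
  have key : Nat.card (ExpSet S q τ P) = ∏ y ∈ vrngP q P, (F y).card := by
    have hget : ∀ (π : {g : V → Option R // g ∈ ExpSet S q τ P}) (y : (vrngP q P : Finset V)),
        (π.1 y.1).isSome := fun π y => (π.2.1 y.1).2 (hvsub y.2)
    have hgetF : ∀ (π : {g : V → Option R // g ∈ ExpSet S q τ P}) (y : (vrngP q P : Finset V)),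
        (π.1 y.1).get (hget π y) ∈ F y.1 := by
      intro π y
      obtain ⟨v, hv, hvF⟩ := hπget π.1 π.2 y.1 y.2
      simpa [hv] using hvF
    set Φ : {g : V → Option R // g ∈ ExpSet S q τ P} → (∀ y : (vrngP q P : Finset V), {v // v ∈ F y.1}) :=
      fun π y => ⟨(π.1 y.1).get (hget π y), hgetF π y⟩ with hΦ
    have e : (ExpSet S q τ P) ≃ (∀ y : (vrngP q P : Finset V), {v // v ∈ F y.1}) := by
      refine { toFun := Φ, invFun := fun f => ⟨Ψ f, hΨmem f⟩, left_inv := ?_, right_inv := ?_ }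
      · rintro ⟨π, hπ⟩
        ext x : 2
        simp only
        by_cases hx : x ∈ varsQ q
        · cases hσ : sigmaP q P x with
          | res r =>
              exact ((hΨval (Φ ⟨π, hπ⟩) x hx).1 r hσ).trans ((hπ.2.2 x hx).2.2 r hσ).symm
          | var y =>
              obtain ⟨hy, heq⟩ := (hΨval (Φ ⟨π, hπ⟩) x hx).2 y hσ
              refine heq.trans ?_
              simp only [hΦ]
              rw [Option.some_get]
              exact ((hπ.2.2 x hx).2.1 y hσ).symm
        · simp only [hΨ, if_neg hx]
          symm
          rw [← Option.not_isSome_iff_eq_none]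
          intro hs
          exact hx ((hπ.1 x).1 hs)
      · intro f
        funext y
        have hσy : sigmaP q P y.1 = Term.var y.1 := by
          obtain ⟨hyv, x, hx, hσ⟩ := Finset.mem_filter.1 y.2
          exact (aux_sigma_idem hx hσ).2
        obtain ⟨hy', heqy⟩ := (hΨval f y.1 (hvsub y.2)).2 y.1 hσy
        have hval : Ψ f y.1 = some (f y).1 := heqy
        apply Subtype.ext
        have h2 : some ((Ψ f y.1).get (hget ⟨Ψ f, hΨmem f⟩ y)) = some (f y).1 := by
          rw [Option.some_get]; exact hval
        exact Option.some_inj.1 h2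
    rw [Nat.card_congr e, Nat.card_pi]
    have h1 : ∀ y : (vrngP q P : Finset V), Nat.card {v // v ∈ F y.1} = (F y.1).card := by
      intro y
      rw [Nat.card_eq_finsetCard]
    rw [Finset.prod_congr rfl (fun y _ => h1 y)]
    exact Finset.prod_coe_sort (vrngP q P) (fun y => (F y).card)
  rw [cCoef, ← Nat.card_coe_set_eq, key]
  exact Finset.prod_congr rfl (fun y _ => hFcard y)
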